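/- In EuclideanSpace ℝ (Fin 3), let (n, m, u) be an orthonormal family of vectors, C a point, d > 0, θ ∈ [0, π], α ∈ ℝ, and let D = C + (d·sin(π−θ)·cos(α+π/2))·n + (d·sin(π−θ)·sin(α+π/2))·m + (d·cos(π−θ))·u. Suppose further B = C − r·u for some r > 0. Then the angle between the vectors B − C and D − C equals θ. (Part of Claim A of the paper's Proposition: NeRF reconstruction realizes the prescribed bond angle ∠(B, C, D) exactly by construction.) -/

import Mathlib

/-!
`D - C` has coordinates `d · (sin φ cos ψ, sin φ sin ψ, cos φ)` in the orthonormal frame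
`(n, m, u)` with `φ = π - θ`: it has length `d` and its `u`-coordinate is `d cos φ`, so it
makes the polar angle `φ` with `u`. Since `B - C` is a positive multiple of `-u`, the angle
at `C` is the supplement `π - φ = θ`.
-/

open Real InnerProductGeometry

variable {E : Type*} [NormedAddCommGroup E] [InnerProductSpace ℝ E]

lemma Orthonormal.norm_sum_smul {ι : Type*} [Fintype ι] {v : ι → E} (hv : Orthonormal ℝ v)
    (c : ι → ℝ) : ‖∑ i, c i • v i‖ = √(∑ i, c i ^ 2) := by
  rw [norm_eq_sqrt_real_inner, hv.inner_sum c c]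
  simp only [conj_trivial, sq]

namespace NeRF

noncomputable def sphericalToCartesian (d φ ψ : ℝ) : Fin 3 → ℝ :=
  ![d * sin φ * cos ψ, d * sin φ * sin ψ, d * cos φ]

lemma sum_sphericalToCartesian_sq (d φ ψ : ℝ) :
    ∑ i, sphericalToCartesian d φ ψ i ^ 2 = d ^ 2 := by
  simp only [sphericalToCartesian, Fin.sum_univ_three, Matrix.cons_val_zero, Matrix.cons_val_one,
    Matrix.cons_val_two, Matrix.head_cons, Matrix.tail_cons]
  linear_combination (d ^ 2 * sin φ ^ 2) * sin_sq_add_cos_sq ψ + d ^ 2 * sin_sq_add_cos_sq φ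

lemma angle_eq_of_inner_eq {u w : E} {d φ : ℝ} (hu : ‖u‖ = 1) (hw : ‖w‖ = d) (hd : 0 < d)
    (hφ : φ ∈ Set.Icc 0 π) (huw : inner ℝ u w = d * cos φ) : angle u w = φ := by
  rw [angle, huw, hu, hw, one_mul, mul_div_cancel_left₀ _ hd.ne', arccos_cos hφ.1 hφ.2]

lemma angle_sum_sphericalToCartesian_smul {v : Fin 3 → E} (hv : Orthonormal ℝ v) {d φ : ℝ}
    (ψ : ℝ) (hd : 0 < d) (hφ : φ ∈ Set.Icc 0 π) :
    angle (v 2) (∑ i, sphericalToCartesian d φ ψ i • v i) = φ := by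
  refine angle_eq_of_inner_eq (hv.1 2) ?_ hd hφ (hv.inner_right_fintype _ 2)
  rw [hv.norm_sum_smul, sum_sphericalToCartesian_sq, sqrt_sq hd.le]

end NeRF

open NeRF

/-- NeRF bond angle: the Euclidean angle between `B − C` and `D − C` equals the
prescribed bond angle `θ`, where `D` is the NeRF-placed point in the orthonormal
local frame `(n, m, u)` and `B = C − r • u` lies behind `C` along `u`. -/
theorem nerf_bond_angle_exact
    (n m u : EuclideanSpace ℝ (Fin 3)) (hortho : Orthonormal ℝ ![n, m, u])
    (C B : EuclideanSpace ℝ (Fin 3)) (d θ α r : ℝ)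
    (hd : 0 < d) (hθ : θ ∈ Set.Icc (0 : ℝ) π) (hr : 0 < r)
    (hB : B = C - r • u)
    (D : EuclideanSpace ℝ (Fin 3))
    (hD : D = C + (d * Real.sin (π - θ) * Real.cos (α + π / 2)) • n
            + (d * Real.sin (π - θ) * Real.sin (α + π / 2)) • m
            + (d * Real.cos (π - θ)) • u) :
    InnerProductGeometry.angle (B - C) (D - C) = θ := by
  have hBC : B - C = -(r • ![n, m, u] 2) := by rw [hB]; simp
  have hDC : D - C = ∑ i, sphericalToCartesian d (π - θ) (α + π / 2) i • ![n, m, u] i := by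
    simp only [hD, sphericalToCartesian, Fin.sum_univ_three, Matrix.cons_val_zero,
      Matrix.cons_val_one, Matrix.cons_val_two, Matrix.head_cons, Matrix.tail_cons]
    abel
  have hπθ : π - θ ∈ Set.Icc 0 π := ⟨by linarith [hθ.2], by linarith [hθ.1]⟩
  rw [hBC, hDC, angle_neg_left, angle_smul_left_of_pos _ _ hr,
    angle_sum_sphericalToCartesian_smul hortho _ hd hπθ, sub_sub_cancel]
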